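/- In ℚ[g₂,g₃][[p,p′]], set W(p) := 1 + Σ_{n≥0} a_n p^{n+2} (so that ℘(p) = W(p)/p²) and V(p) := −2 + Σ_{n≥1} n·a_n p^{n+2} (so that d℘/dp = V(p)/p³), and define D := p′²·W(p) − p²·W(p′) and N := p′³·V(p) − p³·V(p′). Then there exists h ∈ ℚ[g₂,g₃][[p,p′]] such that (p+p′)·N = h·D; equivalently, the expansion of (℘′(p)−℘′(p′))/(℘(p)−℘(p′)) has the form (1/(p·p′·(p+p′)))·(an element of ℚ[g₂,g₃][[p,p′]]). -/

import Mathlib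

/-!
STATEMENT 0: There exists a unique family `(aₙ)` of elements of `ℚ[g₂,g₃]` such that
`℘ := p⁻² + Σ_{n≥0} aₙ pⁿ ∈ ℚ[g₂,g₃]((p))` satisfies `(℘′)² = 4℘³ − g₂℘ − g₃`.
-/

noncomputable section

/-- The polynomial ring `ℚ[g₂, g₃]`, with `g₂ = X 0` and `g₃ = X 1`. -/
abbrev RQ : Type := MvPolynomial (Fin 2) ℚ

/-- The variable `g₂`. -/
def gTwo : RQ := MvPolynomial.X 0

/-- The variable `g₃`. -/
def gThree : RQ := MvPolynomial.X 1

/-- The derivation `d/dp` on the ring of formal Laurent series `ℚ[g₂,g₃]((p))`. -/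
def lsDeriv (f : LaurentSeries RQ) : LaurentSeries RQ where
  coeff n := (n + 1 : ℤ) • f.coeff (n + 1)
  isPWO_support' := by
    have h : Function.support (fun n : ℤ => (n + 1 : ℤ) • f.coeff (n + 1)) ⊆
        (fun n : ℤ => n - 1) '' f.support := by
      intro n hn
      refine ⟨n + 1, ?_, by ring⟩
      intro h0
      apply hn
      simp only [Function.mem_support, not_not] at *
      rw [h0, smul_zero]
    exact (f.isPWO_support.image_of_monotone
      (fun a b hab => sub_le_sub_right hab 1)).mono h

/-- The formal Laurent series `℘ := p⁻² + Σ_{n≥0} aₙ pⁿ` attached to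
a family `(aₙ)` of elements of `ℚ[g₂,g₃]`. -/
def wp (a : ℕ → RQ) : LaurentSeries RQ :=
  HahnSeries.single (-2 : ℤ) (1 : RQ) +
    HahnSeries.ofPowerSeries ℤ RQ (PowerSeries.mk a)

open scoped Classical

/-- The power series `W(p) := 1 + Σ_{n≥0} aₙ p^{n+2}` (so that `℘(p) = W(p)/p²`). -/
def Wser (a : ℕ → RQ) : PowerSeries RQ :=
  PowerSeries.mk fun m => if m = 0 then 1 else if 2 ≤ m then a (m - 2) else 0

/-- The power series `V(p) := −2 + Σ_{n≥1} n·aₙ p^{n+2}` (so that `℘′(p) = V(p)/p³`). -/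
def Vser (a : ℕ → RQ) : PowerSeries RQ :=
  PowerSeries.mk fun m =>
    if m = 0 then -2 else if 2 ≤ m then (m - 2 : ℕ) • a (m - 2) else 0

/-- The embedding of `ℚ[g₂,g₃][[q]]` into `ℚ[g₂,g₃][[p,p′]]` substituting the
variable indexed by `i` for `q`. -/
def emb2 (i : Fin 2) (f : PowerSeries RQ) : MvPowerSeries (Fin 2) RQ :=
  fun d => if d = Finsupp.single i (d i) then PowerSeries.coeff (R := RQ) (d i) f else 0


/-!
The equation `(℘')² = 4℘³ - g₂℘ - g₃` is invariant under `p ↦ -p`, and comparing lowest-order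
terms shows that it has at most one solution `℘ = W(p)/p²` with `W(0) = 1`; hence `℘` is even.
So `W(p) - W(p′) = (p² - p′²) Q` and `D = (p² - p′²)(p′² Q - W(p′))`, where the second factor has
constant term `-1` and is a unit. Since `N` vanishes at `p = p′`, it is `(p - p′) M`, and then
`(p + p′) N = (p² - p′²) M` is a multiple of `D`.
-/

namespace PowerSeries

variable {R : Type*} [CommRing R]

theorem coeff_X_mul_derivative (f : R⟦X⟧) (n : ℕ) :
    coeff n (X * d⁄dX R f) = n * coeff n f := by
  cases n with
  | zero => simp
  | succ n => rw [coeff_succ_X_mul, coeff_derivative]; push_cast; ring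

theorem rescale_X_mul_derivative (c : R) (f : R⟦X⟧) :
    rescale c (X * d⁄dX R f) = X * d⁄dX R (rescale c f) := by
  ext n
  simp only [coeff_rescale, coeff_X_mul_derivative]
  ring

theorem X_mul_derivative_X_pow_mul (m : ℕ) (u : R⟦X⟧) :
    X * d⁄dX R (X ^ m * u) = X ^ m * ((m : R⟦X⟧) * u + X * d⁄dX R u) := by
  ext n
  rw [coeff_X_mul_derivative, coeff_X_pow_mul', coeff_X_pow_mul']
  split_ifs with h
  · rw [map_add, coeff_X_mul_derivative, ← map_natCast (C (R := R)), coeff_C_mul,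
      Nat.cast_sub h]
    ring
  · rw [mul_zero]

/-- The equation `(℘')² = 4℘³ - g₂℘ - g₃` for `℘ = W / X²`, multiplied by `X⁶`. -/
def IsWeierstrassSeries (g₂ g₃ : R) (W : R⟦X⟧) : Prop :=
  (X * d⁄dX R W - 2 * W) ^ 2 = 4 * W ^ 3 - C g₂ * X ^ 4 * W - C g₃ * X ^ 6

theorem IsWeierstrassSeries.rescale_neg_one {g₂ g₃ : R} {W : R⟦X⟧}
    (h : IsWeierstrassSeries g₂ g₃ W) : IsWeierstrassSeries g₂ g₃ (rescale (-1) W) := by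
  have hC (r : R) : rescale (-1) (C r) = C r := by
    ext n
    rcases n with _ | n <;> simp [coeff_C]
  have := congrArg (rescale (-1 : R)) h
  simp only [map_pow, map_sub] at this
  rw [rescale_X_mul_derivative] at this
  simp only [map_mul, map_pow, map_ofNat, hC, rescale_neg_one_X] at this
  unfold IsWeierstrassSeries
  linear_combination this

theorem IsWeierstrassSeries.rescale_neg_one_eq [IsDomain R] [CharZero R] {g₂ g₃ : R}
    {W : R⟦X⟧} (h : IsWeierstrassSeries g₂ g₃ W) (h₀ : constantCoeff W = 1) :
    rescale (-1) W = W := by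
  set W' := rescale (-1 : R) W
  have h₀' : constantCoeff W' = 1 := by
    rw [← coeff_zero_eq_constantCoeff_apply, coeff_rescale, coeff_zero_eq_constantCoeff_apply, h₀]
    ring
  by_contra hne
  set Δ := W - W'
  have hΔ : Δ ≠ 0 := sub_ne_zero.mpr (Ne.symm hne)
  obtain ⟨m, u, hu, hΔu⟩ : ∃ (m : ℕ) (u : R⟦X⟧), constantCoeff u ≠ 0 ∧ Δ = X ^ m * u :=
    ⟨_, _, constantCoeff_divXPowOrder_eq_zero_iff.not.mpr hΔ, X_pow_order_mul_divXPowOrder.symm⟩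
  have h' := h.rescale_neg_one
  unfold IsWeierstrassSeries at h h'
  set A := X * d⁄dX R W - 2 * W
  set A' := X * d⁄dX R W' - 2 * W'
  set Q := 4 * (W ^ 2 + W * W' + W' ^ 2) - C g₂ * X ^ 4
  have key : (X * d⁄dX R Δ - 2 * Δ) * (A + A') = Δ * Q := by
    simp only [Δ, A, A', Q, map_sub]
    linear_combination h - h'
  rw [hΔu, X_mul_derivative_X_pow_mul] at key
  have key' : ((m : R⟦X⟧) * u + X * d⁄dX R u - 2 * u) * (A + A') = u * Q :=
    X_pow_mul_cancel (by linear_combination key)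
  -- constant terms: `(m - 2) u₀ · (-4) = u₀ · 12`
  replace key' := congrArg constantCoeff key'
  simp only [A, A', Q, map_mul, map_add, map_sub, map_pow, map_natCast, map_ofNat, h₀, h₀',
    constantCoeff_X, constantCoeff_C] at key'
  have : ((4 * m + 4 : ℕ) : R) * constantCoeff u = 0 := by
    push_cast
    linear_combination -key'
  exact hu ((mul_eq_zero.mp this).resolve_left (Nat.cast_ne_zero.mpr (by omega)))

theorem coeff_eq_zero_of_odd_of_rescale_neg_one_eq [IsDomain R] [CharZero R] {f : R⟦X⟧}
    (hf : rescale (-1) f = f) {n : ℕ} (hn : Odd n) : coeff n f = 0 := by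
  have := congrArg (coeff n) hf
  rw [coeff_rescale, hn.neg_one_pow, neg_one_mul] at this
  exact self_eq_neg.mp this.symm

theorem coeff_ofPowerSeries_X_mul_derivative (f : R⟦X⟧) (n : ℤ) :
    (HahnSeries.ofPowerSeries ℤ R (X * d⁄dX R f)).coeff n =
      n • (HahnSeries.ofPowerSeries ℤ R f).coeff n := by
  rcases lt_or_ge n 0 with hn | hn
  · rw [coeff_coe, coeff_coe, if_pos hn, if_pos hn, smul_zero]
  · lift n to ℕ using hn
    rw [HahnSeries.ofPowerSeries_apply_coeff, HahnSeries.ofPowerSeries_apply_coeff,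
      coeff_X_mul_derivative, natCast_zsmul, nsmul_eq_mul]

end PowerSeries

section LaurentSeries

open PowerSeries

theorem Wser_eq (a : ℕ → RQ) : Wser a = 1 + X ^ 2 * mk a := by
  ext n
  rw [Wser, coeff_mk, map_add, coeff_X_pow_mul', coeff_one, coeff_mk]
  rcases n with _ | _ | n <;> simp

theorem ofPowerSeries_Wser (a : ℕ → RQ) :
    HahnSeries.ofPowerSeries ℤ RQ (Wser a) = HahnSeries.ofPowerSeries ℤ RQ X ^ 2 * wp a := by
  rw [← map_pow, Wser_eq, wp, map_add, map_one, map_mul, HahnSeries.ofPowerSeries_X_pow,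
    mul_add, HahnSeries.single_mul_single]
  simp

theorem constantCoeff_Wser (a : ℕ → RQ) : constantCoeff (Wser a) = 1 := by
  simp [Wser]

theorem ofPowerSeries_X_mul_derivative_Wser_sub (a : ℕ → RQ) :
    HahnSeries.ofPowerSeries ℤ RQ (X * d⁄dX RQ (Wser a) - 2 * Wser a) =
      HahnSeries.ofPowerSeries ℤ RQ X ^ 3 * lsDeriv (wp a) := by
  rw [← map_pow]
  refine HahnSeries.ext (funext fun n => ?_)
  have hW := congrArg (HahnSeries.coeff · n) (ofPowerSeries_Wser a)
  rw [← map_pow] at hW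
  rw [map_sub, HahnSeries.coeff_sub, coeff_ofPowerSeries_X_mul_derivative, map_mul, map_ofNat,
    HahnSeries.ofPowerSeries_X_pow, HahnSeries.coeff_single_mul]
  rw [HahnSeries.ofPowerSeries_X_pow, HahnSeries.coeff_single_mul] at hW
  rw [two_mul, HahnSeries.coeff_add, hW, one_mul, one_mul]
  change _ = (n - (3 : ℕ) + 1) • (wp a).coeff (n - (3 : ℕ) + 1)
  rw [show n - (3 : ℕ) + 1 = n - (2 : ℕ) by push_cast; ring]
  simp only [zsmul_eq_mul]
  push_cast
  ring

theorem isWeierstrassSeries_Wser (a : ℕ → RQ)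
    (ha : (lsDeriv (wp a)) ^ 2 =
      4 * (wp a) ^ 3 - (HahnSeries.C gTwo : LaurentSeries RQ) * wp a -
        (HahnSeries.C gThree : LaurentSeries RQ)) :
    IsWeierstrassSeries gTwo gThree (Wser a) := by
  rw [IsWeierstrassSeries, ← (HahnSeries.ofPowerSeries_injective (Γ := ℤ)).eq_iff, map_pow,
    ofPowerSeries_X_mul_derivative_Wser_sub]
  simp only [map_sub, map_mul, map_pow, map_ofNat, HahnSeries.ofPowerSeries_C,
    ofPowerSeries_Wser]
  linear_combination HahnSeries.ofPowerSeries ℤ RQ X ^ 6 * ha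

end LaurentSeries

section TwoVariables

open PowerSeries

theorem Finsupp.fin_two_eq_single_zero_iff {M : Type*} [Zero M] (d : Fin 2 →₀ M) : d = single 0 (d 0) ↔ d 1 = 0 := by
  refine ⟨fun h => by rw [h]; simp, fun h => ?_⟩
  ext i
  fin_cases i <;> simp [h]

theorem Finsupp.fin_two_eq_single_one_iff {M : Type*} [Zero M] (d : Fin 2 →₀ M) : d = single 1 (d 1) ↔ d 0 = 0 := by
  refine ⟨fun h => by rw [h]; simp, fun h => ?_⟩
  ext i
  fin_cases i <;> simp [h]

theorem coeff_emb2_zero (f : PowerSeries RQ) (d : Fin 2 →₀ ℕ) :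
    MvPowerSeries.coeff d (emb2 0 f) = if d 1 = 0 then PowerSeries.coeff (d 0) f else 0 := by
  simp_rw [MvPowerSeries.coeff_apply, emb2, Finsupp.fin_two_eq_single_zero_iff]

theorem coeff_emb2_one (f : PowerSeries RQ) (d : Fin 2 →₀ ℕ) :
    MvPowerSeries.coeff d (emb2 1 f) = if d 0 = 0 then PowerSeries.coeff (d 1) f else 0 := by
  simp_rw [MvPowerSeries.coeff_apply, emb2, Finsupp.fin_two_eq_single_one_iff]

theorem constantCoeff_emb2 (i : Fin 2) (f : PowerSeries RQ) :
    MvPowerSeries.constantCoeff (emb2 i f) = PowerSeries.constantCoeff f := by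
  rw [← MvPowerSeries.coeff_zero_eq_constantCoeff_apply, MvPowerSeries.coeff_apply, emb2]
  simp

/-- The divided difference `(φ(X₀) - φ(X₁)) / (X₀ᵗ - X₁ᵗ)`, for `φ` a power series in `Xᵗ`. -/
def divDiff {R : Type*} [Semiring R] (t : ℕ) (φ : R⟦X⟧) : MvPowerSeries (Fin 2) R :=
  fun d => if t ∣ d 0 ∧ t ∣ d 1 then PowerSeries.coeff (d 0 + d 1 + t) φ else 0

theorem MvPowerSeries.coeff_X_pow_mul {σ R : Type*} [CommSemiring R] [DecidableEq σ] (i : σ) (t : ℕ)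
    (g : MvPowerSeries σ R) (d : σ →₀ ℕ) :
    coeff d (X i ^ t * g) = if t ≤ d i then coeff (d - Finsupp.single i t) g else 0 := by
  simp_rw [X_pow_eq, coeff_monomial_mul, one_mul, Finsupp.single_le_iff]

theorem coeff_X_pow_mul_divDiff {R : Type*} [CommSemiring R] (t : ℕ) (φ : R⟦X⟧) (k : Fin 2) (d : Fin 2 →₀ ℕ) :
    MvPowerSeries.coeff d (MvPowerSeries.X k ^ t * divDiff t φ) =
      if t ≤ d k ∧ t ∣ d 0 ∧ t ∣ d 1 then PowerSeries.coeff (d 0 + d 1) φ else 0 := by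
  rw [MvPowerSeries.coeff_X_pow_mul]
  by_cases h : t ≤ d k
  · obtain ⟨n, hn⟩ := Nat.exists_eq_add_of_le' h
    fin_cases k <;>
      simp_all [MvPowerSeries.coeff_apply, divDiff, add_right_comm, add_assoc, add_comm t]
  · simp [h]

theorem X_pow_sub_X_pow_mul_divDiff {t : ℕ} {φ : PowerSeries RQ}
    (hφ : ∀ n, ¬ t ∣ n → PowerSeries.coeff n φ = 0) :
    (MvPowerSeries.X 0 ^ t - MvPowerSeries.X 1 ^ t) * divDiff t φ = emb2 0 φ - emb2 1 φ := by
  refine MvPowerSeries.ext fun d => ?_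
  rw [sub_mul, map_sub, map_sub, coeff_X_pow_mul_divDiff, coeff_X_pow_mul_divDiff,
    coeff_emb2_zero, coeff_emb2_one]
  generalize d 0 = i, d 1 = j
  by_cases hij : t ∣ i ∧ t ∣ j
  · have le_of_ne_zero {n : ℕ} (hn : t ∣ n) (h0 : n ≠ 0) : t ≤ n :=
      Nat.le_of_dvd (Nat.pos_of_ne_zero h0) hn
    rcases eq_or_ne i 0 with rfl | hi <;> rcases eq_or_ne j 0 with rfl | hj
    · simp
    · have ht : t ≠ 0 := by rintro rfl; exact hj (zero_dvd_iff.mp hij.2)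
      simp [hij, ht, hj, le_of_ne_zero hij.2 hj]
    · have ht : t ≠ 0 := by rintro rfl; exact hi (zero_dvd_iff.mp hij.1)
      simp [hij, ht, hi, le_of_ne_zero hij.1 hi]
    · simp [hij, hi, hj, le_of_ne_zero hij.1 hi, le_of_ne_zero hij.2 hj]
  · have hj : j = 0 → PowerSeries.coeff i φ = 0 := by
      rintro rfl
      exact hφ i (by simpa using hij)
    have hi : i = 0 → PowerSeries.coeff j φ = 0 := by
      rintro rfl
      exact hφ j (by simpa using hij)
    simp only [hij, and_false, if_false, sub_zero]
    split_ifs <;> simp_all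

theorem X_sub_X_dvd_X_pow_mul_emb2_sub (s : ℕ) (φ : PowerSeries RQ) :
    MvPowerSeries.X 0 - MvPowerSeries.X 1 ∣
      MvPowerSeries.X 1 ^ s * emb2 0 φ - MvPowerSeries.X 0 ^ s * emb2 1 φ := by
  have h := X_pow_sub_X_pow_mul_divDiff (t := 1) (φ := φ) (fun n hn => (hn (one_dvd n)).elim)
  rw [pow_one, pow_one] at h
  obtain ⟨q, hq⟩ := sub_dvd_pow_sub_pow (MvPowerSeries.X 0 : MvPowerSeries (Fin 2) RQ)
    (MvPowerSeries.X 1) s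
  refine ⟨MvPowerSeries.X 1 ^ s * divDiff 1 φ - emb2 1 φ * q, ?_⟩
  linear_combination -MvPowerSeries.X 1 ^ s * h - emb2 1 φ * hq

theorem X_pow_two_mul_emb2_sub_eq_of_odd {φ : PowerSeries RQ}
    (hφ : ∀ n, Odd n → PowerSeries.coeff n φ = 0) :
    MvPowerSeries.X 1 ^ 2 * emb2 0 φ - MvPowerSeries.X 0 ^ 2 * emb2 1 φ =
      (MvPowerSeries.X 0 ^ 2 - MvPowerSeries.X 1 ^ 2) *
        (MvPowerSeries.X 1 ^ 2 * divDiff 2 φ - emb2 1 φ) := by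
  have h := X_pow_sub_X_pow_mul_divDiff (t := 2) (φ := φ)
    (fun n hn => hφ n (Nat.odd_iff.mpr (Nat.two_dvd_ne_zero.mp hn)))
  linear_combination -MvPowerSeries.X 1 ^ 2 * h

end TwoVariables

theorem statement10 (a : ℕ → RQ)
    (ha : (lsDeriv (wp a)) ^ 2 =
      4 * (wp a) ^ 3 - (HahnSeries.C gTwo : LaurentSeries RQ) * wp a -
        (HahnSeries.C gThree : LaurentSeries RQ)) :
    ∃ h : MvPowerSeries (Fin 2) RQ,
      (MvPowerSeries.X 0 + MvPowerSeries.X 1) *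
          ((MvPowerSeries.X 1) ^ 3 * emb2 0 (Vser a) -
            (MvPowerSeries.X 0) ^ 3 * emb2 1 (Vser a)) =
        h * ((MvPowerSeries.X 1) ^ 2 * emb2 0 (Wser a) -
          (MvPowerSeries.X 0) ^ 2 * emb2 1 (Wser a)) := by
  have hW_even : PowerSeries.rescale (-1) (Wser a) = Wser a :=
    (isWeierstrassSeries_Wser a ha).rescale_neg_one_eq (constantCoeff_Wser a)
  obtain ⟨M, hM⟩ := X_sub_X_dvd_X_pow_mul_emb2_sub 3 (Vser a)
  obtain ⟨u, hu⟩ : IsUnit (MvPowerSeries.X 1 ^ 2 * divDiff 2 (Wser a) - emb2 1 (Wser a)) := by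
    rw [MvPowerSeries.isUnit_iff_constantCoeff]
    simp [constantCoeff_emb2, constantCoeff_Wser]
  refine ⟨↑u⁻¹ * M, ?_⟩
  rw [hM, X_pow_two_mul_emb2_sub_eq_of_odd
    (fun n hn => PowerSeries.coeff_eq_zero_of_odd_of_rescale_neg_one_eq hW_even hn), ← hu]
  linear_combination (-(MvPowerSeries.X 0 ^ 2 - MvPowerSeries.X 1 ^ 2) * M) * u.inv_mul
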